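/- arXiv:2512.00202 — 3 statements merged into one kernel-verified Lean document; each statement's English description precedes it below -/
import Mathlib

section
/- Let V be a finite-dimensional complex vector space and let B be a nondegenerate alternating bilinear form on V. Then there is no nilpotent endomorphism w of V with rank(w) = 2 and w² ≠ 0 satisfying B(w·v₁, v₂) + B(v₁, w·v₂) = 0 for all v₁, v₂ ∈ V. -/
/-!
A skew-adjoint `w` has self-adjoint square, and `B x (w² x) = -B (w x) (w x) = 0` since `B` is
alternating. A self-adjoint map of rank at most one that is isotropic in this sense is zero: if
`w² x ≠ 0` it spans the range, so `B (w² x) z = B x (w² z)` is a multiple of `B x (w² x) = 0`, and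
nondegeneracy forces `w² x = 0`. But for nilpotent `w` the range strictly shrinks under `w`, so
`rank w = 2` gives `rank w² ≤ 1`, whence `w² = 0`.
-/

namespace LinearMap

open Module Submodule

section Range

variable {R M : Type*} [Semiring R] [AddCommMonoid M] [Module R M] {f : Module.End R M}

theorem range_pow_succ_of_range_sq_eq (h : range (f ^ 2) = range f) :
    ∀ n : ℕ, range (f ^ (n + 1)) = range f
  | 0 => by rw [zero_add, pow_one]
  | n + 1 => by
    rw [pow_succ', Module.End.mul_eq_comp, range_comp, range_pow_succ_of_range_sq_eq h n,
      ← range_comp, ← Module.End.mul_eq_comp, ← sq, h]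

theorem range_sq_lt_range_of_isNilpotent (hf : IsNilpotent f) (h : range f ≠ ⊥) :
    range (f ^ 2) < range f := by
  refine lt_of_le_of_ne (sq f ▸ range_comp_le_range f f) fun heq => h ?_
  obtain ⟨k, hk⟩ := hf
  rw [← range_pow_succ_of_range_sq_eq heq k, pow_succ, hk, zero_mul, range_zero]

end Range

variable {K V : Type*} [Field K] [AddCommGroup V] [Module K V] [FiniteDimensional K V]

theorem eq_zero_of_isAdjointPair_self_of_finrank_range_le_one {B : V →ₗ[K] V →ₗ[K] K}
    (hB : ∀ u, (∀ v, B u v = 0) → u = 0) {A : Module.End K V} (hA : IsAdjointPair B B A A)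
    (hiso : ∀ x, B x (A x) = 0) (hrk : finrank K (range A) ≤ 1) : A = 0 := by
  ext x
  by_contra hx
  refine hx (hB _ fun z => ?_)
  have hspan : K ∙ A x = range A :=
    eq_of_le_of_finrank_le ((span_singleton_le_iff_mem _ _).mpr (mem_range_self A x))
      (hrk.trans (finrank_span_singleton hx).ge)
  obtain ⟨c, hc⟩ := mem_span_singleton.mp (hspan ▸ mem_range_self A z)
  rw [hA, ← hc, map_smul, hiso, smul_zero]

end LinearMap

theorem no_rank_two_nilpotent_in_symplectic_stmt17
    (V : Type) [AddCommGroup V] [Module ℂ V] [FiniteDimensional ℂ V]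
    (B : V →ₗ[ℂ] V →ₗ[ℂ] ℂ)
    -- `B` is alternating and nondegenerate
    (halt : ∀ v, B v v = 0)
    (hnd : ∀ u, (∀ v, B u v = 0) → u = 0) :
    ¬ ∃ w : Module.End ℂ V, IsNilpotent w ∧ Module.finrank ℂ (LinearMap.range w) = 2 ∧
        w ^ 2 ≠ 0 ∧ ∀ v₁ v₂, B (w v₁) v₂ + B v₁ (w v₂) = 0 := by
  rintro ⟨w, hnil, hrk, hw2, hskew⟩
  have hw : B.IsAdjointPair B w ⇑(-w) := fun x y => by
    rw [LinearMap.neg_apply, map_neg, eq_neg_iff_add_eq_zero, hskew]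
  have hsq : B.IsAdjointPair B ⇑(w ^ 2) ⇑(w ^ 2) := by
    simpa only [sq, neg_mul_neg] using hw.mul hw
  have hiso : ∀ x, B x ((w ^ 2) x) = 0 := fun x => by
    rw [sq, Module.End.mul_apply]
    simpa only [halt, zero_add] using hskew x (w x)
  have hrange : LinearMap.range w ≠ ⊥ := fun h => by
    rw [h, finrank_bot] at hrk
    omega
  have hrk_sq : Module.finrank ℂ (LinearMap.range (w ^ 2)) ≤ 1 := by
    have := Submodule.finrank_lt_finrank_of_lt
      (LinearMap.range_sq_lt_range_of_isNilpotent hnil hrange)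
    omega
  exact hw2 (LinearMap.eq_zero_of_isAdjointPair_self_of_finrank_range_le_one hnd hsq hiso hrk_sq)
end

section
/- Let K ⊆ L be number fields, let n be a positive integer, and let 𝔥 be a K-Lie subalgebra of the n×n matrices over K (under the commutator bracket). Suppose there is a symmetric invertible n×n matrix M over L such that the L-linear span of the image of 𝔥 in the n×n matrices over L equals {x : x is an n×n matrix over L with M·x + xᵀ·M = 0}. Then there is a symmetric invertible n×n matrix M' over K such that 𝔥 = {x : x is an n×n matrix over K with M'·x + xᵀ·M' = 0}. -/
/-! Expand `M = ∑ bᵢ • Aᵢ` along a `K`-basis `b` of `L`. Each `Aᵢ` is a symmetric matrix over `K`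
for which every element of `𝔥` is skew-adjoint, by uniqueness of coordinates. The polynomial
`det (∑ tᵢ • Aᵢ)` does not vanish at `t = b`, so, `K` being infinite, some `M' = ∑ aᵢ • Aᵢ` with
`aᵢ ∈ K` is invertible, and `𝔥 ⊆ 𝔰𝔬(M')`. Equality is a dimension count: `X ↦ M' * X` identifies
`𝔰𝔬(M')` with the skew-symmetric matrices, so `dim_K 𝔰𝔬(M') = n(n-1)/2 = dim_L 𝔰𝔬(M)`, and
`dim_L 𝔰𝔬(M)` is at most `dim_K 𝔥` because `𝔰𝔬(M)` is the `L`-span of `𝔥`. -/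

open Matrix Module

section SkewAdjoint

variable {R n : Type*} [CommRing R]

theorem Matrix.isSkewAdjoint_iff_mul_add_transpose_mul_eq_zero [Fintype n] {J A : Matrix n n R} :
    J.IsSkewAdjoint A ↔ J * A + Aᵀ * J = 0 := by
  rw [Matrix.IsSkewAdjoint, Matrix.IsAdjointPair, mul_neg, add_comm, add_eq_zero_iff_eq_neg]

theorem coe_skewAdjointMatricesSubmodule [Fintype n] [DecidableEq n] (J : Matrix n n R) :
    (skewAdjointMatricesSubmodule J : Set (Matrix n n R)) = {A | J * A + Aᵀ * J = 0} := by
  ext A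
  exact (mem_skewAdjointMatricesSubmodule J A).trans
    Matrix.isSkewAdjoint_iff_mul_add_transpose_mul_eq_zero

theorem Matrix.IsSymm.isSkewAdjoint_iff [Fintype n] [DecidableEq n] {Q : Matrix n n R}
    (hQ : Q.IsSymm) {A : Matrix n n R} :
    Q.IsSkewAdjoint A ↔ (1 : Matrix n n R).IsSkewAdjoint (Q * A) := by
  simp only [Matrix.IsSkewAdjoint, Matrix.IsAdjointPair, transpose_mul, hQ.eq, mul_one, one_mul,
    mul_neg]

theorem Matrix.isSkewAdjoint_one_iff [Fintype n] [DecidableEq n] {A : Matrix n n R} :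
    (1 : Matrix n n R).IsSkewAdjoint A ↔ Aᵀ = -A := by
  rw [Matrix.IsSkewAdjoint, Matrix.IsAdjointPair, mul_one, one_mul]

theorem Matrix.apply_eq_neg_of_transpose_eq_neg {A : Matrix n n R} (hA : Aᵀ = -A) (i j : n) :
    A j i = -A i j := by
  simpa using congr_fun₂ hA i j

theorem Matrix.apply_self_eq_zero_of_transpose_eq_neg [NeZero (2 : R)] [NoZeroDivisors R]
    {A : Matrix n n R} (hA : Aᵀ = -A) (i : n) : A i i = 0 := by
  have h : (2 : R) * A i i = 0 := by linear_combination apply_eq_neg_of_transpose_eq_neg hA i i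
  exact (mul_eq_zero.mp h).resolve_left two_ne_zero

theorem Matrix.ext_of_transpose_eq_neg [NeZero (2 : R)] [NoZeroDivisors R] [LinearOrder n]
    {A B : Matrix n n R} (hA : Aᵀ = -A) (hB : Bᵀ = -B) (h : ∀ i j, i < j → A i j = B i j) :
    A = B := by
  ext i j
  rcases lt_trichotomy i j with hij | rfl | hij
  · exact h i j hij
  · rw [apply_self_eq_zero_of_transpose_eq_neg hA, apply_self_eq_zero_of_transpose_eq_neg hB]
  · rw [apply_eq_neg_of_transpose_eq_neg hA, apply_eq_neg_of_transpose_eq_neg hB, h j i hij]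

def Matrix.skewOfUpper [LinearOrder n] (f : {p : n × n // p.1 < p.2} → R) : Matrix n n R :=
  of fun i j => if h : i < j then f ⟨(i, j), h⟩ else if h' : j < i then -f ⟨(j, i), h'⟩ else 0

theorem Matrix.transpose_skewOfUpper [LinearOrder n] (f : {p : n × n // p.1 < p.2} → R) :
    (skewOfUpper f)ᵀ = -skewOfUpper f := by
  ext i j
  simp only [skewOfUpper, transpose_apply, neg_apply, of_apply]
  rcases lt_trichotomy i j with hij | rfl | hij
  · simp [hij, not_lt_of_gt hij]
  · simp
  · simp [hij, not_lt_of_gt hij]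

end SkewAdjoint

section Finrank

variable {F n : Type*} [Field F] [Fintype n]

theorem finrank_skewAdjointMatricesSubmodule_eq_one [DecidableEq n] {Q : Matrix n n F}
    (hQ : Q.IsSymm) (hu : IsUnit Q) :
    finrank F (skewAdjointMatricesSubmodule Q) =
      finrank F (skewAdjointMatricesSubmodule (1 : Matrix n n F)) := by
  let e := hu.unit.mulLeftLinearEquiv F (Matrix n n F)
  have : skewAdjointMatricesSubmodule Q =
      (skewAdjointMatricesSubmodule 1).comap (e : Matrix n n F →ₗ[F] Matrix n n F) := by
    ext A
    simp only [Submodule.mem_comap, mem_skewAdjointMatricesSubmodule, hQ.isSkewAdjoint_iff]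
    rfl
  rw [this, Submodule.comap_equiv_eq_map_symm, LinearEquiv.finrank_map_eq]

theorem finrank_skewAdjointMatricesSubmodule_one [NeZero (2 : F)] [LinearOrder n] :
    finrank F (skewAdjointMatricesSubmodule (1 : Matrix n n F)) =
      Fintype.card {p : n × n // p.1 < p.2} := by
  let upper :
      skewAdjointMatricesSubmodule (1 : Matrix n n F) →ₗ[F] ({p : n × n // p.1 < p.2} → F) :=
    { toFun A p := (A : Matrix n n F) p.1.1 p.1.2
      map_add' _ _ := rfl
      map_smul' _ _ := rfl }
  have hskew (A : skewAdjointMatricesSubmodule (1 : Matrix n n F)) : (A : Matrix n n F)ᵀ = -A :=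
    isSkewAdjoint_one_iff.mp ((mem_skewAdjointMatricesSubmodule _ _).mp A.2)
  have hbij : Function.Bijective upper := by
    refine ⟨fun A B h => Subtype.ext <| ext_of_transpose_eq_neg (hskew A) (hskew B)
      fun i j hij => congr_fun h ⟨(i, j), hij⟩, fun f => ?_⟩
    refine ⟨⟨skewOfUpper f, (mem_skewAdjointMatricesSubmodule _ _).mpr
      (isSkewAdjoint_one_iff.mpr (transpose_skewOfUpper f))⟩, funext fun p => ?_⟩
    show skewOfUpper f p.1.1 p.1.2 = f p
    simp [skewOfUpper, p.2]
  rw [(LinearEquiv.ofBijective upper hbij).finrank_eq, finrank_fintype_fun_eq_card]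

theorem finrank_skewAdjointMatricesSubmodule [NeZero (2 : F)] [LinearOrder n] {Q : Matrix n n F}
    (hQ : Q.IsSymm) (hu : IsUnit Q) :
    finrank F (skewAdjointMatricesSubmodule Q) = Fintype.card {p : n × n // p.1 < p.2} := by
  rw [finrank_skewAdjointMatricesSubmodule_eq_one hQ hu, finrank_skewAdjointMatricesSubmodule_one]

end Finrank

section

variable {K L : Type*} [Field K] [Field L] [Algebra K L] {m n ι : Type*} [Fintype ι]

theorem Matrix.sum_smul_map_coord (b : Basis ι K L) (M : Matrix m n L) :
    ∑ i, b i • (M.map (b.coord i)).map (algebraMap K L) = M := by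
  ext p q
  simp only [Matrix.sum_apply, smul_apply, map_apply, Basis.coord_apply, smul_eq_mul]
  conv_rhs => rw [← b.sum_repr (M p q)]
  simp only [Algebra.smul_def, mul_comm]

theorem Matrix.eq_zero_of_sum_smul_map_eq_zero {b : ι → L} (hb : LinearIndependent K b)
    {B : ι → Matrix m n K} (h : ∑ i, b i • (B i).map (algebraMap K L) = 0) (i : ι) : B i = 0 := by
  ext p q
  refine Fintype.linearIndependent_iff.mp hb (fun i => B i p q) ?_ i
  simpa [Algebra.smul_def, mul_comm, Matrix.sum_apply] using congr_fun₂ h p q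

end

section

variable {K L : Type*} [Field K] [Infinite K] [Field L] [Algebra K L] {n ι : Type*} [Fintype n]
  [DecidableEq n] [Fintype ι]

theorem exists_det_sum_smul_ne_zero (A : ι → Matrix n n K) (b : ι → L)
    (h : (∑ i, b i • (A i).map (algebraMap K L)).det ≠ 0) :
    ∃ a : ι → K, (∑ i, a i • A i).det ≠ 0 := by
  let P : Matrix n n (MvPolynomial ι K) :=
    ∑ i, (MvPolynomial.X i : MvPolynomial ι K) • (A i).map MvPolynomial.C
  have hPL : (MvPolynomial.aeval b).mapMatrix P = ∑ i, b i • (A i).map (algebraMap K L) := by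
    ext p q
    simp [P, Matrix.sum_apply]
  have hPK (a : ι → K) : (MvPolynomial.eval a).mapMatrix P = ∑ i, a i • A i := by
    ext p q
    simp [P, Matrix.sum_apply]
  have hP : P.det ≠ 0 := by
    rw [← hPL, ← AlgHom.map_det] at h
    exact fun h0 => h (by rw [h0, map_zero])
  obtain ⟨a, ha⟩ : ∃ a, MvPolynomial.eval a P.det ≠ 0 := by
    by_contra! h0
    exact hP (MvPolynomial.funext fun a => by rw [h0, map_zero])
  exact ⟨a, by rwa [← hPK, ← RingHom.map_det]⟩

end

theorem Submodule.finrank_span_le_finrank {K L W : Type*} [Field K] [Field L] [Algebra K L]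
    [AddCommGroup W] [Module K W] [Module L W] [IsScalarTower K L W] (S : Submodule K W)
    [FiniteDimensional K S] :
    finrank L (span L (S : Set W)) ≤ finrank K S := by
  let c := finBasis K S
  have hc : span K (Set.range (S.subtype ∘ c)) = S := by
    rw [Set.range_comp, ← Submodule.map_span, c.span_eq, Submodule.map_top, Submodule.range_subtype]
  calc finrank L (span L (S : Set W))
      = finrank L (span L (Set.range (S.subtype ∘ c))) := by
        rw [← span_span_of_tower K L (Set.range _), hc]
    _ ≤ Fintype.card (Fin (finrank K S)) := finrank_range_le_card _
    _ = finrank K S := Fintype.card_fin _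

section Descent

variable {K L : Type*} [Field K] [Infinite K] [Field L] [Algebra K L] [FiniteDimensional K L]
  {n : Type*} [Fintype n] [DecidableEq n]

theorem exists_isSymm_isUnit_le_skewAdjointMatricesSubmodule (W : Submodule K (Matrix n n K))
    {M : Matrix n n L} (hMs : M.IsSymm) (hMu : IsUnit M)
    (hW : ∀ x ∈ W, M * x.map (algebraMap K L) + (x.map (algebraMap K L))ᵀ * M = 0) :
    ∃ M' : Matrix n n K, M'.IsSymm ∧ IsUnit M' ∧ W ≤ skewAdjointMatricesSubmodule M' := by
  let b := finBasis K L
  let A i := M.map (b.coord i)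
  have hM : ∑ i, b i • (A i).map (algebraMap K L) = M := sum_smul_map_coord b M
  have hAs (i) : (A i).IsSymm := hMs.map _
  have hAW (i) : ∀ x ∈ W, A i * x + xᵀ * A i = 0 := by
    intro x hx
    refine eq_zero_of_sum_smul_map_eq_zero b.linearIndependent
      (B := fun i => A i * x + xᵀ * A i) ?_ i
    have := hW x hx
    rw [← hM] at this
    simpa [Matrix.map_add, Matrix.map_mul, transpose_map, Finset.sum_mul, Finset.mul_sum,
      smul_add, Finset.sum_add_distrib] using this
  obtain ⟨a, ha⟩ := exists_det_sum_smul_ne_zero A b (by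
    rw [hM]; exact (M.isUnit_iff_isUnit_det.mp hMu).ne_zero)
  refine ⟨∑ i, a i • A i, ?_, (isUnit_iff_isUnit_det _).mpr (isUnit_iff_ne_zero.mpr ha), ?_⟩
  · simp only [IsSymm, transpose_sum, transpose_smul, (hAs _).eq]
  · intro x hx
    rw [SetLike.mem_coe.symm, coe_skewAdjointMatricesSubmodule]
    simp [Finset.sum_mul, Finset.mul_sum, ← Finset.sum_add_distrib, ← smul_add, hAW _ x hx]

end Descent

theorem exists_eq_skewAdjointMatricesSubmodule_of_span_eq {K L : Type*} [Field K] [Infinite K]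
    [NeZero (2 : K)] [Field L] [Algebra K L] [FiniteDimensional K L] {n : Type*} [Fintype n]
    [LinearOrder n] (W : Submodule K (Matrix n n K)) {M : Matrix n n L} (hMs : M.IsSymm)
    (hMu : IsUnit M)
    (hspan : Submodule.span L ((fun x : Matrix n n K => x.map (algebraMap K L)) '' W) =
      skewAdjointMatricesSubmodule M) :
    ∃ M' : Matrix n n K, M'.IsSymm ∧ IsUnit M' ∧ W = skewAdjointMatricesSubmodule M' := by
  have : NeZero (2 : L) :=
    ⟨fun h => two_ne_zero (α := K) ((algebraMap K L).injective (by rw [map_ofNat, h, map_zero]))⟩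
  have hW (x) (hx : x ∈ W) :
      M * x.map (algebraMap K L) + (x.map (algebraMap K L))ᵀ * M = 0 := by
    have hx' : x.map (algebraMap K L) ∈ skewAdjointMatricesSubmodule M :=
      hspan ▸ Submodule.subset_span ⟨x, hx, rfl⟩
    rwa [← SetLike.mem_coe, coe_skewAdjointMatricesSubmodule] at hx'
  obtain ⟨M', hM's, hM'u, hle⟩ := exists_isSymm_isUnit_le_skewAdjointMatricesSubmodule W hMs hMu hW
  refine ⟨M', hM's, hM'u, Submodule.eq_of_le_of_finrank_le hle ?_⟩
  calc finrank K (skewAdjointMatricesSubmodule M')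
      = finrank L (skewAdjointMatricesSubmodule M) := by
        rw [finrank_skewAdjointMatricesSubmodule hM's hM'u,
          finrank_skewAdjointMatricesSubmodule hMs hMu]
    _ = finrank L (Submodule.span L
          (W.map (Algebra.linearMap K L).mapMatrix : Set (Matrix n n L))) := by
        rw [← hspan, Submodule.map_coe]; rfl
    _ ≤ finrank K W := (Submodule.finrank_span_le_finrank _).trans (Submodule.finrank_map_le _ _)

attribute [local instance 100] LieRing.ofAssociativeRing

theorem orthogonal_descent_stmt18_general (K L : Type) [Field K] [Field L]
    [NumberField K] [NumberField L] [Algebra K L]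
    (n : ℕ)
    (𝔥 : LieSubalgebra K (Matrix (Fin n) (Fin n) K))
    (M : Matrix (Fin n) (Fin n) L) (hMsymm : M.IsSymm) (hMunit : IsUnit M)
    -- the `L`-span of the image of `𝔥` is the orthogonal Lie algebra of `M`
    (hspan : (Submodule.span L
        ((fun x : Matrix (Fin n) (Fin n) K => x.map (algebraMap K L)) ''
          (𝔥 : Set (Matrix (Fin n) (Fin n) K))) : Set (Matrix (Fin n) (Fin n) L)) =
      {x | M * x + x.transpose * M = 0}) :
    ∃ M' : Matrix (Fin n) (Fin n) K, M'.IsSymm ∧ IsUnit M' ∧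
      (𝔥 : Set (Matrix (Fin n) (Fin n) K)) = {x | M' * x + x.transpose * M' = 0} := by
  obtain ⟨M', hM's, hM'u, h⟩ := exists_eq_skewAdjointMatricesSubmodule_of_span_eq
    𝔥.toSubmodule hMsymm hMunit
    (SetLike.coe_injective (by rw [coe_skewAdjointMatricesSubmodule]; exact hspan))
  exact ⟨M', hM's, hM'u, by rw [← coe_skewAdjointMatricesSubmodule, ← h]; rfl⟩

theorem orthogonal_descent_stmt18 (K L : Type) [Field K] [Field L]
    [NumberField K] [NumberField L] [Algebra K L]
    (n : ℕ) (hn : 0 < n)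
    (𝔥 : LieSubalgebra K (Matrix (Fin n) (Fin n) K))
    (M : Matrix (Fin n) (Fin n) L) (hMsymm : M.IsSymm) (hMunit : IsUnit M)
    -- the `L`-span of the image of `𝔥` is the orthogonal Lie algebra of `M`
    (hspan : (Submodule.span L
        ((fun x : Matrix (Fin n) (Fin n) K => x.map (algebraMap K L)) ''
          (𝔥 : Set (Matrix (Fin n) (Fin n) K))) : Set (Matrix (Fin n) (Fin n) L)) =
      {x | M * x + x.transpose * M = 0}) :
    ∃ M' : Matrix (Fin n) (Fin n) K, M'.IsSymm ∧ IsUnit M' ∧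
      (𝔥 : Set (Matrix (Fin n) (Fin n) K)) = {x | M' * x + x.transpose * M' = 0} :=
  orthogonal_descent_stmt18_general K L n 𝔥 M hMsymm hMunit hspan
end

section
/- Let n ≥ 3 and let R be a quadratic form on ℝⁿ with polar form ⟨u, v⟩ := R(u + v) − R(u) − R(v). Let z, e, e₃, …, eₙ be a basis of ℝⁿ with R(z) = 0, ⟨z, e⟩ = 0, R(e) ≠ 0, and ⟨eᵢ, z⟩ ≠ 0 for some i ≥ 3. Define the linear endomorphism w of ℝⁿ by w·z = 0, w·e = ⟨e, e⟩·z, and w·eᵢ = ⟨eᵢ, e⟩·z − ⟨eᵢ, z⟩·e for 3 ≤ i ≤ n. Let A₁, …, A_{n−2} be a basis of the space of linear functionals on ℝⁿ vanishing on z and e. Then every quadratic form P on ℝⁿ satisfying P(exp(tw)·v) = P(v) for all t ∈ ℝ and v ∈ ℝⁿ can be written as P = a·R + Σ_{1 ≤ i ≤ j ≤ n−2} a_{ij}·Aᵢ·Aⱼ for some real numbers a and a_{ij}. -/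
/-!
Since `w³ = 0`, `t ↦ P (exp (t w) v)` is a polynomial in `t`; its constancy makes `w` skew for
the polar form `B` of `P`. Writing `⟨·,·⟩` for the polar form of `R`, one has
`w u = ⟨e, u⟩ z - ⟨z, u⟩ e`, so skewness says `φ · B(z, ·) = ψ · B(e, ·)` in `Sym² V*`, where
`φ = ⟨e, ·⟩` and `ψ = ⟨z, ·⟩` are independent. Hence `B(z, ·) = a ψ` and `B(e, ·) = a φ` for a
scalar `a`, the polar form of `P - a R` vanishes on `z` and `e`, so its partial maps lie in the
span of the `Aᵢ`, and `P - a R` is a quadratic form in the `Aᵢ`.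
-/

open Module Matrix QuadraticMap

theorem LinearIndependent.exists_eq_sum_smul_of_range_le_span {R M N ι : Type*} [CommRing R]
    [AddCommGroup M] [Module R M] [AddCommGroup N] [Module R N] [Fintype ι] {A : ι → N}
    (hA : LinearIndependent R A) (T : M →ₗ[R] N)
    (hT : LinearMap.range T ≤ Submodule.span R (Set.range A)) :
    ∃ ψ : ι → M →ₗ[R] R, ∀ u, T u = ∑ i, ψ i u • A i := by
  refine ⟨fun i => Finsupp.lapply i ∘ₗ hA.repr ∘ₗ T.codRestrict _ fun u => hT ⟨u, rfl⟩,
    fun u => ?_⟩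
  have h := hA.linearCombination_repr (T.codRestrict _ (fun u => hT ⟨u, rfl⟩) u)
  simpa [Finsupp.linearCombination_apply, Finsupp.sum_fintype, eq_comm] using h

section Field

variable {K V : Type*} [Field K] [AddCommGroup V] [Module K V]

theorem Module.Dual.eq_zero_of_mul_add_mul_eq_zero [NeZero (2 : K)] {ψ f : Dual K V} {x : V}
    (hx : ψ x ≠ 0) (H : ∀ u v, ψ u * f v + f u * ψ v = 0) : f = 0 := by
  have hfx : f x = 0 := by
    have h2 : 2 * ψ x * f x = 0 := by linear_combination H x x
    simpa [hx, two_ne_zero] using h2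
  ext v
  have hv := H x v
  rw [hfx, zero_mul, add_zero] at hv
  exact (mul_eq_zero.1 hv).resolve_left hx

-- `H` says `φ f = ψ g` in `Sym² V*`; `e` and `x` witness that `φ` and `ψ` are independent.
theorem Module.Dual.exists_eq_smul_of_mul_add_mul_eq [NeZero (2 : K)] {φ ψ f g : Dual K V}
    {e x : V}
    (he : φ e ≠ 0) (hψe : ψ e = 0) (hx : ψ x ≠ 0)
    (H : ∀ u v, φ u * f v + f u * φ v = ψ u * g v + g u * ψ v) :
    ∃ c : K, f = c • ψ ∧ g = c • φ := by
  have hfe : f e = 0 := by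
    have h2 : 2 * φ e * f e = 0 := by linear_combination H e e + 2 * g e * hψe
    simpa [he, two_ne_zero] using h2
  have hf : f = (g e / φ e) • ψ := by
    ext v
    have hv := H e v
    rw [hfe, hψe, zero_mul, add_zero, zero_mul, zero_add] at hv
    simp only [LinearMap.smul_apply, smul_eq_mul]
    field_simp
    linear_combination hv
  refine ⟨g e / φ e, hf, sub_eq_zero.1 (eq_zero_of_mul_add_mul_eq_zero hx fun u v => ?_)⟩
  have huv := H u v
  rw [hf] at huv
  simp only [LinearMap.sub_apply, LinearMap.smul_apply, smul_eq_mul] at huv ⊢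
  linear_combination -huv

theorem LinearMap.BilinForm.exists_apply_eq_smul_of_forall_apply_self_eq_zero [NeZero (2 : K)]
    (β B : LinearMap.BilinForm K V) {z e x : V} {w : V →ₗ[K] V}
    (hw : ∀ u, w u = β e u • z - β z u • e) (hB : ∀ u, B (w u) u = 0)
    (hee : β e e ≠ 0) (hze : β z e = 0) (hzx : β z x ≠ 0) :
    ∃ c : K, B z = c • β z ∧ B e = c • β e := by
  have hanti : ∀ u v, B (w u) v + B (w v) u = 0 := fun u v =>
    neg_eq_iff_add_eq_zero.1 (LinearMap.IsAlt.neg (B := B ∘ₗ w) hB u v)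
  refine Module.Dual.exists_eq_smul_of_mul_add_mul_eq hee hze hzx fun u v => ?_
  have huv := hanti u v
  simp only [hw, map_sub, map_smul, LinearMap.sub_apply, LinearMap.smul_apply,
    smul_eq_mul] at huv
  linear_combination huv

theorem Module.Dual.apply_eq_zero_of_mem_span {ι : Type*} [Fintype ι] {A : ι → Dual K V}
    {φ : Dual K V} (hφ : φ ∈ Submodule.span K (Set.range A)) {u : V}
    (hu : u ∈ ⨅ i, LinearMap.ker (A i)) : φ u = 0 := by
  obtain ⟨c, rfl⟩ := (Submodule.mem_span_range_iff_exists_fun K).1 hφ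
  simp only [Submodule.mem_iInf, LinearMap.mem_ker] at hu
  simp [hu]

theorem QuadraticMap.exists_eq_sum_mul_of_polarBilin_mem_span [NeZero (2 : K)] {ι : Type*}
    [Fintype ι] {A : ι → Dual K V} (hA : LinearIndependent K A) (Q : QuadraticMap K V K)
    (hQ : ∀ u, polarBilin Q u ∈ Submodule.span K (Set.range A)) :
    ∃ c : ι → ι → K, ∀ v, Q v = ∑ i, ∑ j, c i j * A i v * A j v := by
  obtain ⟨ψ, hψ⟩ := hA.exists_eq_sum_smul_of_range_le_span (polarBilin Q)
    (by rintro _ ⟨u, rfl⟩; exact hQ u)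
  have hψA : ∀ i, ψ i ∈ Submodule.span K (Set.range A) := by
    intro i
    refine mem_span_of_iInf_ker_le_ker fun u hu => ?_
    have hu0 : polarBilin Q u = 0 := by
      ext v
      rw [polarBilin_apply_apply, polar_comm, ← polarBilin_apply_apply]
      exact Module.Dual.apply_eq_zero_of_mem_span (hQ v) hu
    rw [hψ] at hu0
    exact Fintype.linearIndependent_iff.1 hA (fun i => ψ i u) hu0 i
  choose d hd using fun i => (Submodule.mem_span_range_iff_exists_fun K).1 (hψA i)
  refine ⟨fun i j => d j i / 2, fun v => ?_⟩
  have h2 : 2 * Q v = ∑ i, ∑ j, d i j * A j v * A i v := by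
    rw [two_mul, ← two_nsmul, ← polar_self, ← polarBilin_apply_apply, hψ]
    simp only [← hd, LinearMap.sum_apply, LinearMap.smul_apply, smul_eq_mul, Finset.sum_mul]
  have half : ∀ i j, d i j / 2 * A j v * A i v = 2⁻¹ * (d i j * A j v * A i v) :=
    fun _ _ => by ring
  rw [Finset.sum_comm]
  simp only [half, ← Finset.mul_sum, ← h2]
  field_simp

theorem QuadraticMap.exists_eq_smul_add_sum_mul_of_polar_apply_self_eq_zero [NeZero (2 : K)]
    (R P : QuadraticMap K V K) {z e x : V} {w : V →ₗ[K] V}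
    (hw : ∀ u, w u = polar R e u • z - polar R z u • e) (hP : ∀ u, polar P (w u) u = 0)
    (hee : polar R e e ≠ 0) (hze : polar R z e = 0) (hzx : polar R z x ≠ 0)
    {ι : Type*} [Fintype ι] {A : ι → Dual K V} (hA : LinearIndependent K A)
    (hAspan : ∀ φ : Dual K V, φ z = 0 → φ e = 0 → φ ∈ Submodule.span K (Set.range A)) :
    ∃ (a : K) (c : ι → ι → K), ∀ v, P v = a * R v + ∑ i, ∑ j, c i j * A i v * A j v := by
  obtain ⟨a, hPz, hPe⟩ := LinearMap.BilinForm.exists_apply_eq_smul_of_forall_apply_self_eq_zero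
    (polarBilin R) (polarBilin P) hw hP hee hze hzx
  have hvanish : ∀ {y} u, polarBilin P y = a • polarBilin R y →
      polarBilin (P - a • R) u y = 0 := by
    intro y u hy
    have hyu := LinearMap.congr_fun hy u
    rw [polarBilin_apply_apply, polar_comm]
    simp only [polarBilin_apply_apply, LinearMap.smul_apply, polar, _root_.sub_apply,
      _root_.smul_apply, smul_eq_mul] at hyu ⊢
    linear_combination hyu
  obtain ⟨c, hc⟩ := (P - a • R).exists_eq_sum_mul_of_polarBilin_mem_span hA
    fun u => hAspan _ (hvanish u hPz) (hvanish u hPe)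
  refine ⟨a, c, fun v => ?_⟩
  rw [← hc, _root_.sub_apply, _root_.smul_apply, smul_eq_mul]
  ring

theorem QuadraticMap.polar_eq_zero_of_forall_apply_add_smul_add_sq_smul [CharZero K]
    (Q : QuadraticMap K V K) {v a b : V}
    (h : ∀ t : K, Q (v + t • a + t ^ 2 • b) = Q v) : polar Q a v = 0 := by
  have hpolar : ∀ t : K, polar Q (v + t • a + t ^ 2 • b) (v + t • a + t ^ 2 • b) = polar Q v v :=
    fun t => by rw [polar_self, polar_self, h]
  have h₁ := hpolar 1
  have h₂ := hpolar (-1)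
  have h₃ := hpolar 2
  have h₄ := hpolar (-2)
  simp only [polar_add_left, polar_add_right, polar_smul_left, polar_smul_right,
    smul_eq_mul] at h₁ h₂ h₃ h₄
  -- the coefficient of `t` in a quartic polynomial vanishing at `±1, ±2`
  linear_combination (1 / 3 : K) * h₁ - (1 / 3 : K) * h₂ - (1 / 24 : K) * h₃ +
    (1 / 24 : K) * h₄ - (1 / 2 : K) * polar_comm Q v a

end Field

theorem Finset.sum_sum_eq_sum_sum_ite_le {ι M : Type*} [Fintype ι] [LinearOrder ι]
    [AddCommMonoid M] (f : ι → ι → M) :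
    ∑ i, ∑ j, f i j = ∑ i, ∑ j, if i ≤ j then (if i = j then f i i else f i j + f j i) else 0 := by
  have hsplit : ∑ i, ∑ j, f i j =
      (∑ i, ∑ j, if i ≤ j then f i j else 0) + ∑ i, ∑ j, if j < i then f i j else 0 := by
    simp only [← Finset.sum_add_distrib]
    refine Finset.sum_congr rfl fun i _ => Finset.sum_congr rfl fun j _ => ?_
    rcases le_or_gt i j with h | h
    · simp [h, not_lt.2 h]
    · simp [h, not_le.2 h]
  rw [hsplit, Finset.sum_comm (f := fun i j => if j < i then f i j else 0),
    ← Finset.sum_add_distrib]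
  refine Finset.sum_congr rfl fun i _ => ?_
  rw [← Finset.sum_add_distrib]
  refine Finset.sum_congr rfl fun j _ => ?_
  rcases lt_trichotomy i j with h | rfl | h
  · simp [h, h.le, h.ne]
  · simp
  · simp [not_le.2 h, not_lt.2 h.le]

theorem exists_sum_sum_mul_eq_sum_sum_ite_le {ι R : Type*} [Fintype ι] [LinearOrder ι]
    [CommRing R] (c : ι → ι → R) :
    ∃ c' : ι → ι → R, ∀ a : ι → R,
      ∑ i, ∑ j, c i j * a i * a j = ∑ i, ∑ j, if i ≤ j then c' i j * a i * a j else 0 := by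
  refine ⟨fun i j => if i = j then c i i else c i j + c j i, fun a => ?_⟩
  rw [Finset.sum_sum_eq_sum_sum_ite_le]
  refine Finset.sum_congr rfl fun i _ => Finset.sum_congr rfl fun j _ => ?_
  dsimp only
  split_ifs with hle heq
  · subst heq; rfl
  · ring
  · rfl

theorem QuadraticMap.apply_eq_polar_smul_sub_polar_smul_of_span_eq_top {K V : Type*}
    [CommRing K] [AddCommGroup V] [Module K V] {m : ℕ} (R : QuadraticMap K V K) {z e : V}
    {E : Fin m → V}
    (hspan : Submodule.span K (Set.range (Fin.cons z (Fin.cons e E) : Fin (m + 2) → V)) = ⊤)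
    (hRz : R z = 0) (hze : polar R z e = 0) {w : V →ₗ[K] V} (hwz : w z = 0)
    (hwe : w e = polar R e e • z) (hwE : ∀ i, w (E i) = polar R (E i) e • z - polar R (E i) z • e)
    (u : V) : w u = polar R e u • z - polar R z u • e := by
  suffices w = (polarBilin R e).smulRight z - (polarBilin R z).smulRight e from
    LinearMap.congr_fun this u
  refine LinearMap.ext_on_range hspan fun i => ?_
  refine Fin.cases ?_ (Fin.cases ?_ fun j => ?_) i
  · simp [hwz, polar_comm R e z, hze, polar_self, hRz]
  · simp [hwe, hze]
  · simp [hwE, polar_comm R (E j)]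

theorem NormedSpace.exp_eq_sum_range_of_pow_eq_zero (𝕂 : Type*) {𝔸 : Type*} [Field 𝕂]
    [CharZero 𝕂] [Ring 𝔸] [Algebra 𝕂 𝔸] [TopologicalSpace 𝔸] [IsTopologicalRing 𝔸] {x : 𝔸} {n : ℕ}
    (hx : x ^ n = 0) :
    NormedSpace.exp x = ∑ k ∈ Finset.range n, (k.factorial⁻¹ : 𝕂) • x ^ k := by
  rw [NormedSpace.exp_eq_tsum 𝕂]
  refine tsum_eq_sum fun k hk => ?_
  rw [pow_eq_zero_of_le (by simpa using hk) hx, smul_zero]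

theorem Matrix.exp_smul_mulVec_of_pow_three_eq_zero {n : Type*} [Fintype n] [DecidableEq n]
    {w : Matrix n n ℝ} (hw : w ^ 3 = 0) (t : ℝ) (v : n → ℝ) :
    NormedSpace.exp (t • w) *ᵥ v = v + t • (w *ᵥ v) + t ^ 2 • ((2⁻¹ : ℝ) • (w *ᵥ (w *ᵥ v))) := by
  rw [NormedSpace.exp_eq_sum_range_of_pow_eq_zero ℝ (n := 3) (by rw [smul_pow, hw, smul_zero])]
  simp only [Finset.sum_range_succ, Finset.sum_range_zero, smul_pow, add_mulVec, smul_mulVec,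
    mulVec_mulVec, pow_two]
  simp [smul_smul, mul_comm]

theorem Matrix.toQuadraticForm'_of_apply {R n : Type*} [CommRing R] [Fintype n]
    [DecidableEq n] (p : n → n → R) (v : n → R) :
    toQuadraticForm' (of p) v = ∑ i, ∑ j, p i j * v i * v j := by
  simp only [toQuadraticForm', LinearMap.BilinMap.toQuadraticMap_apply, toLinearMap₂'_apply,
    of_apply, smul_eq_mul]
  exact Finset.sum_congr rfl fun i _ => Finset.sum_congr rfl fun j _ => by ring

theorem invariant_quadratic_forms_stmt19_general (m : ℕ)
    -- `R` is a quadratic form on `ℝⁿ`, `n = m + 2 ≥ 3`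
    (Amat : Matrix (Fin (m + 2)) (Fin (m + 2)) ℝ)
    (R : (Fin (m + 2) → ℝ) → ℝ)
    (hR : ∀ v, R v = ∑ i, ∑ j, Amat i j * v i * v j)
    -- the polar form of `R`
    (pol : (Fin (m + 2) → ℝ) → (Fin (m + 2) → ℝ) → ℝ)
    (hpol : ∀ u v, pol u v = R (u + v) - R u - R v)
    -- `z, e, e₃, …, eₙ` is a basis of `ℝⁿ`
    (z e : Fin (m + 2) → ℝ) (E : Fin m → Fin (m + 2) → ℝ)
    (hbasis : LinearIndependent ℝ (Fin.cons z (Fin.cons e E) : Fin (m + 2) → Fin (m + 2) → ℝ) ∧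
      Submodule.span ℝ
        (Set.range (Fin.cons z (Fin.cons e E) : Fin (m + 2) → Fin (m + 2) → ℝ)) = ⊤)
    (hRz : R z = 0) (hze : pol z e = 0) (hRe : R e ≠ 0)
    (hEz : ∃ i, pol (E i) z ≠ 0)
    -- the nilpotent endomorphism `w`, realized as a matrix
    (w : Matrix (Fin (m + 2)) (Fin (m + 2)) ℝ)
    (hwz : w.mulVec z = 0)
    (hwe : w.mulVec e = pol e e • z)
    (hwE : ∀ i, w.mulVec (E i) = pol (E i) e • z - pol (E i) z • e)
    -- `A₁, …, A_{n-2}` is a basis of the linear functionals vanishing on `z` and `e`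
    (A : Fin m → ((Fin (m + 2) → ℝ) →ₗ[ℝ] ℝ))
    (hAind : LinearIndependent ℝ A)
    (hAspan : ∀ φ : (Fin (m + 2) → ℝ) →ₗ[ℝ] ℝ, φ z = 0 → φ e = 0 →
      φ ∈ Submodule.span ℝ (Set.range A)) :
    -- any quadratic form invariant under every `exp(tw)` lies in the pencil spanned by `R`
    -- and the products `AᵢAⱼ`
    ∀ (p : Fin (m + 2) → Fin (m + 2) → ℝ),
      (∀ (t : ℝ) (v : Fin (m + 2) → ℝ),
        (∑ i, ∑ j, p i j * (NormedSpace.exp (t • w)).mulVec v i *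
            (NormedSpace.exp (t • w)).mulVec v j) =
          ∑ i, ∑ j, p i j * v i * v j) →
      ∃ (aa : ℝ) (c : Fin m → Fin m → ℝ), ∀ v : Fin (m + 2) → ℝ,
        (∑ i, ∑ j, p i j * v i * v j) =
          aa * R v + ∑ i, ∑ j, if i ≤ j then c i j * A i v * A j v else 0 := by
  intro p hinv
  obtain ⟨Q, rfl⟩ : ∃ Q : QuadraticForm ℝ (Fin (m + 2) → ℝ), R = ⇑Q :=
    ⟨toQuadraticForm' (of Amat), funext fun v => (hR v).trans (toQuadraticForm'_of_apply _ v).symm⟩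
  obtain rfl : pol = polar Q := funext₂ hpol
  obtain ⟨i, hi⟩ := hEz
  have hw : ∀ u, w *ᵥ u = polar Q e u • z - polar Q z u • e :=
    Q.apply_eq_polar_smul_sub_polar_smul_of_span_eq_top (w := toLin' w) hbasis.2 hRz hze hwz hwe
      hwE
  have hw3 : w ^ 3 = 0 := toLin'.injective <| LinearMap.ext fun u => by
    simp only [toLin'_apply, pow_succ, pow_zero, one_mul, ← mulVec_mulVec, hw u, mulVec_sub,
      mulVec_smul, hwz, hwe, mulVec_zero, zero_mulVec, smul_zero, sub_zero]
  have hskew : ∀ u, polar (toQuadraticForm' (of p)) (w *ᵥ u) u = 0 := fun u => by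
    have hinv' : ∀ t : ℝ, toQuadraticForm' (of p) (u + t • (w *ᵥ u) + t ^ 2 • ((2⁻¹ : ℝ) •
        (w *ᵥ (w *ᵥ u)))) = toQuadraticForm' (of p) u := fun t => by
      rw [toQuadraticForm'_of_apply, toQuadraticForm'_of_apply, ←
        exp_smul_mulVec_of_pow_three_eq_zero hw3]
      exact hinv t u
    exact (toQuadraticForm' (of p)).polar_eq_zero_of_forall_apply_add_smul_add_sq_smul hinv'
  obtain ⟨a, c, hc⟩ := Q.exists_eq_smul_add_sum_mul_of_polar_apply_self_eq_zero
    (toQuadraticForm' (of p)) (w := toLin' w) hw hskew (by simpa [polar_self] using hRe) hze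
    (by rwa [polar_comm]) hAind hAspan
  obtain ⟨c', hc'⟩ := exists_sum_sum_mul_eq_sum_sum_ite_le c
  exact ⟨a, c', fun v => by rw [← toQuadraticForm'_of_apply, hc, hc' fun i => A i v]⟩

theorem invariant_quadratic_forms_stmt19 (m : ℕ) (hm : 1 ≤ m)
    -- `R` is a quadratic form on `ℝⁿ`, `n = m + 2 ≥ 3`
    (Amat : Matrix (Fin (m + 2)) (Fin (m + 2)) ℝ)
    (R : (Fin (m + 2) → ℝ) → ℝ)
    (hR : ∀ v, R v = ∑ i, ∑ j, Amat i j * v i * v j)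
    -- the polar form of `R`
    (pol : (Fin (m + 2) → ℝ) → (Fin (m + 2) → ℝ) → ℝ)
    (hpol : ∀ u v, pol u v = R (u + v) - R u - R v)
    -- `z, e, e₃, …, eₙ` is a basis of `ℝⁿ`
    (z e : Fin (m + 2) → ℝ) (E : Fin m → Fin (m + 2) → ℝ)
    (hbasis : LinearIndependent ℝ (Fin.cons z (Fin.cons e E) : Fin (m + 2) → Fin (m + 2) → ℝ) ∧
      Submodule.span ℝ
        (Set.range (Fin.cons z (Fin.cons e E) : Fin (m + 2) → Fin (m + 2) → ℝ)) = ⊤)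
    (hRz : R z = 0) (hze : pol z e = 0) (hRe : R e ≠ 0)
    (hEz : ∃ i, pol (E i) z ≠ 0)
    -- the nilpotent endomorphism `w`, realized as a matrix
    (w : Matrix (Fin (m + 2)) (Fin (m + 2)) ℝ)
    (hwz : w.mulVec z = 0)
    (hwe : w.mulVec e = pol e e • z)
    (hwE : ∀ i, w.mulVec (E i) = pol (E i) e • z - pol (E i) z • e)
    -- `A₁, …, A_{n-2}` is a basis of the linear functionals vanishing on `z` and `e`
    (A : Fin m → ((Fin (m + 2) → ℝ) →ₗ[ℝ] ℝ))
    (hAz : ∀ i, A i z = 0) (hAe : ∀ i, A i e = 0)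
    (hAind : LinearIndependent ℝ A)
    (hAspan : ∀ φ : (Fin (m + 2) → ℝ) →ₗ[ℝ] ℝ, φ z = 0 → φ e = 0 →
      φ ∈ Submodule.span ℝ (Set.range A)) :
    -- any quadratic form invariant under every `exp(tw)` lies in the pencil spanned by `R`
    -- and the products `AᵢAⱼ`
    ∀ (p : Fin (m + 2) → Fin (m + 2) → ℝ),
      (∀ (t : ℝ) (v : Fin (m + 2) → ℝ),
        (∑ i, ∑ j, p i j * (NormedSpace.exp (t • w)).mulVec v i *
            (NormedSpace.exp (t • w)).mulVec v j) =
          ∑ i, ∑ j, p i j * v i * v j) →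
      ∃ (aa : ℝ) (c : Fin m → Fin m → ℝ), ∀ v : Fin (m + 2) → ℝ,
        (∑ i, ∑ j, p i j * v i * v j) =
          aa * R v + ∑ i, ∑ j, if i ≤ j then c i j * A i v * A j v else 0 :=
  invariant_quadratic_forms_stmt19_general m Amat R hR pol hpol z e E hbasis hRz hze hRe hEz w hwz
    hwe hwE A hAind hAspan
end
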